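/- Let A be an m×n complex matrix of rank r with singular value decomposition A = U₁Σ₁V₁*, and B an m×n complex matrix of rank s with singular value decomposition B = Ũ₁Σ̃₁Ṽ₁*, and let E = B − A. Then ‖B† − A†‖_F² = ‖Σ̃₁⁻¹Ũ₁*U₂‖_F² + ‖Ṽ₂*V₁Σ₁⁻¹‖_F² + ‖B†EA†‖_F². -/

import Mathlib

open Matrix

/-- The square of the Frobenius norm of a complex matrix. -/
noncomputable def frobSq {α β : Type*} [Fintype α] [Fintype β] (M : Matrix α β ℂ) : ℝ :=
  ∑ i, ∑ j, ‖M i j‖ ^ 2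

/-- The spectral norm (ℓ²-operator norm) of a complex matrix. -/
noncomputable def spec {α β : Type*} [Fintype α] [Fintype β] [DecidableEq β]
    (M : Matrix α β ℂ) : ℝ :=
  ‖LinearMap.toContinuousLinearMap (Matrix.toEuclideanLin M)‖

/-- `X` is the Moore–Penrose inverse of `M` (the four Penrose equations). -/
def IsMoorePenrose {α β : Type*} [Fintype α] [Fintype β]
    (M : Matrix α β ℂ) (X : Matrix β α ℂ) : Prop :=
  M * X * M = M ∧ X * M * X = X ∧ (M * X)ᴴ = M * X ∧ (X * M)ᴴ = X * M

/-!
With `P = U₂U₂ᴴ = 1 - AA†` and `Q = Ṽ₂Ṽ₂ᴴ = 1 - B†B`, the ring identity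
`B† - A† = B†P - QA† - B†(B - A)A†` splits `B† - A†` into three terms that are pairwise
orthogonal for the trace inner product `⟪X, Y⟫ = tr (XᴴY)`: the first and third start with `Ṽ₁`
and the second with `Ṽ₂`, while the first ends with `U₂ᴴ` and the third with `U₁ᴴ`.
Pythagoras and the unitary invariance of the Frobenius norm give the identity.
-/

section Frobenius

variable {l m n p : Type*} [Fintype l] [Fintype m] [Fintype n] [Fintype p]

lemma frobSq_eq_re_trace (M : Matrix m n ℂ) : frobSq M = (trace (Mᴴ * M)).re := by
  simp only [frobSq, trace, diag_apply, Matrix.mul_apply, conjTranspose_apply, Complex.re_sum]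
  rw [Finset.sum_comm]
  refine Finset.sum_congr rfl fun i _ => Finset.sum_congr rfl fun j _ => ?_
  rw [Complex.sq_norm, Complex.normSq_apply, Complex.mul_re]
  simp

lemma frobSq_neg (M : Matrix m n ℂ) : frobSq (-M) = frobSq M := by
  simp [frobSq]

lemma frobSq_sub_of_trace_eq_zero {X Y : Matrix m n ℂ} (h : trace (Xᴴ * Y) = 0) :
    frobSq (X - Y) = frobSq X + frobSq Y := by
  have h' : trace (Yᴴ * X) = 0 := by
    rw [← conjTranspose_conjTranspose X, ← conjTranspose_mul, trace_conjTranspose, h, star_zero]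
  rw [← frobSq_neg Y, sub_eq_add_neg]
  simp only [frobSq_eq_re_trace, conjTranspose_add, conjTranspose_neg, Matrix.add_mul,
    Matrix.mul_add, Matrix.mul_neg, Matrix.neg_mul, trace_add, trace_neg, h, h', neg_zero,
    add_zero, zero_add, neg_neg, Complex.add_re]

lemma frobSq_sub_sub_of_trace_eq_zero {X Y Z : Matrix m n ℂ} (hXY : trace (Xᴴ * Y) = 0)
    (hXZ : trace (Xᴴ * Z) = 0) (hYZ : trace (Yᴴ * Z) = 0) :
    frobSq (X - Y - Z) = frobSq X + frobSq Y + frobSq Z := by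
  have h : trace ((X - Y)ᴴ * Z) = 0 := by
    rw [conjTranspose_sub, Matrix.sub_mul, trace_sub, hXZ, hYZ, sub_zero]
  rw [frobSq_sub_of_trace_eq_zero h, frobSq_sub_of_trace_eq_zero hXY]

lemma trace_conjTranspose_mul_mul_eq_zero_of_left [DecidableEq l] {P : Matrix m l ℂ}
    {P' : Matrix m p ℂ} (h : Pᴴ * P' = 0) (M : Matrix l n ℂ) (N : Matrix p n ℂ) :
    trace ((P * M)ᴴ * (P' * N)) = 0 := by
  rw [conjTranspose_mul, Matrix.mul_assoc, ← Matrix.mul_assoc Pᴴ, h, Matrix.zero_mul,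
    Matrix.mul_zero, trace_zero]

lemma trace_conjTranspose_mul_mul_eq_zero_of_right {Q : Matrix n l ℂ} {Q' : Matrix n p ℂ}
    (h : Q'ᴴ * Q = 0) (M : Matrix m l ℂ) (N : Matrix m p ℂ) :
    trace ((M * Qᴴ)ᴴ * (N * Q'ᴴ)) = 0 := by
  rw [conjTranspose_mul, conjTranspose_conjTranspose, Matrix.mul_assoc, trace_mul_comm,
    Matrix.mul_assoc, Matrix.mul_assoc, h, Matrix.mul_zero, Matrix.mul_zero, trace_zero]

lemma frobSq_mul_of_conjTranspose_mul_self [DecidableEq l] {P : Matrix m l ℂ}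
    (hP : Pᴴ * P = 1) (M : Matrix l n ℂ) : frobSq (P * M) = frobSq M := by
  rw [frobSq_eq_re_trace, frobSq_eq_re_trace, conjTranspose_mul, Matrix.mul_assoc,
    ← Matrix.mul_assoc Pᴴ, hP, Matrix.one_mul]

lemma frobSq_mul_conjTranspose_of_conjTranspose_mul_self [DecidableEq l] {Q : Matrix n l ℂ}
    (hQ : Qᴴ * Q = 1) (M : Matrix m l ℂ) : frobSq (M * Qᴴ) = frobSq M := by
  rw [frobSq_eq_re_trace, frobSq_eq_re_trace, conjTranspose_mul, conjTranspose_conjTranspose,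
    Matrix.mul_assoc, trace_mul_comm, Matrix.mul_assoc, Matrix.mul_assoc, hQ, Matrix.mul_one]

end Frobenius

lemma conjTranspose_fromCols_mul_fromCols_eq_one_iff {m k₁ k₂ R : Type*} [Fintype m]
    [DecidableEq k₁] [DecidableEq k₂] [Semiring R] [StarRing R]
    (W₁ : Matrix m k₁ R) (W₂ : Matrix m k₂ R) :
    (fromCols W₁ W₂)ᴴ * fromCols W₁ W₂ = 1 ↔
      W₁ᴴ * W₁ = 1 ∧ W₁ᴴ * W₂ = 0 ∧ W₂ᴴ * W₁ = 0 ∧ W₂ᴴ * W₂ = 1 := by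
  rw [conjTranspose_fromCols_eq_fromRows_conjTranspose, fromRows_mul_fromCols,
    ← fromBlocks_one, fromBlocks_inj]

lemma fromCols_mul_conjTranspose_fromCols {m k₁ k₂ R : Type*} [Fintype k₁] [Fintype k₂]
    [Semiring R] [StarRing R] (W₁ : Matrix m k₁ R) (W₂ : Matrix m k₂ R) :
    fromCols W₁ W₂ * (fromCols W₁ W₂)ᴴ = W₁ * W₁ᴴ + W₂ * W₂ᴴ := by
  rw [conjTranspose_fromCols_eq_fromRows_conjTranspose, fromCols_mul_fromRows]

lemma diagonal_mul_diagonal_inv {ι K : Type*} [Fintype ι] [DecidableEq ι] [Field K] {d : ι → K}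
    (hd : ∀ i, d i ≠ 0) : diagonal d * diagonal (fun i => (d i)⁻¹) = 1 := by
  rw [diagonal_mul_diagonal, ← diagonal_one]
  exact congrArg diagonal (funext fun i => mul_inv_cancel₀ (hd i))

lemma mul_mul_conjTranspose_mul_mul_mul_conjTranspose {m n k l R : Type*} [Fintype n]
    [Fintype k] [DecidableEq k] [Semiring R] [StarRing R] (U : Matrix m k R) (V : Matrix n k R)
    (W : Matrix l k R) {D D' : Matrix k k R} (hV : Vᴴ * V = 1) (hD : D * D' = 1) :
    U * D * Vᴴ * (V * D' * Wᴴ) = U * Wᴴ := by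
  simp only [Matrix.mul_assoc]
  rw [← Matrix.mul_assoc Vᴴ, hV, Matrix.one_mul, ← Matrix.mul_assoc D, hD, Matrix.one_mul]

lemma sub_eq_wedin_decomposition {m n R : Type*} [Fintype m] [Fintype n] [DecidableEq m]
    [DecidableEq n] [Ring R] (A B : Matrix m n R) (A' B' : Matrix n m R) :
    B' - A' = B' * (1 - A * A') - (1 - B' * B) * A' - B' * (B - A) * A' := by
  simp only [Matrix.mul_sub, Matrix.sub_mul, Matrix.mul_one, Matrix.one_mul, Matrix.mul_assoc]
  abel

theorem frobSq_sub_eq_of_thinSVD {m n k l k' l' : Type*} [Fintype m] [Fintype n] [Fintype k]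
    [Fintype l] [Fintype k'] [Fintype l'] [DecidableEq m] [DecidableEq n] [DecidableEq k]
    [DecidableEq l] [DecidableEq k'] [DecidableEq l']
    {A B : Matrix m n ℂ} {A' B' : Matrix n m ℂ}
    {U₁ : Matrix m k ℂ} {U₂ : Matrix m l ℂ} {V₁ : Matrix n k ℂ}
    {tU₁ : Matrix m k' ℂ} {tV₁ : Matrix n k' ℂ} {tV₂ : Matrix n l' ℂ}
    {D D' : Matrix k k ℂ} {G G' : Matrix k' k' ℂ}
    (hU : (fromCols U₁ U₂)ᴴ * fromCols U₁ U₂ = 1) (hU' : fromCols U₁ U₂ * (fromCols U₁ U₂)ᴴ = 1)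
    (hV₁ : V₁ᴴ * V₁ = 1) (htU₁ : tU₁ᴴ * tU₁ = 1)
    (htV : (fromCols tV₁ tV₂)ᴴ * fromCols tV₁ tV₂ = 1)
    (htV' : fromCols tV₁ tV₂ * (fromCols tV₁ tV₂)ᴴ = 1)
    (hD : D * D' = 1) (hG : G' * G = 1)
    (hA : A = U₁ * D * V₁ᴴ) (hB : B = tU₁ * G * tV₁ᴴ)
    (hA' : A' = V₁ * D' * U₁ᴴ) (hB' : B' = tV₁ * G' * tU₁ᴴ) :
    frobSq (B' - A') = frobSq (G' * tU₁ᴴ * U₂) + frobSq (tV₂ᴴ * V₁ * D')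
      + frobSq (B' * (B - A) * A') := by
  obtain ⟨hU₁, hU₁₂, -, hU₂⟩ := (conjTranspose_fromCols_mul_fromCols_eq_one_iff U₁ U₂).1 hU
  obtain ⟨htV₁, htV₁₂, htV₂₁, htV₂⟩ :=
    (conjTranspose_fromCols_mul_fromCols_eq_one_iff tV₁ tV₂).1 htV
  have hAA' : 1 - A * A' = U₂ * U₂ᴴ := by
    rw [hA, hA', mul_mul_conjTranspose_mul_mul_mul_conjTranspose _ _ _ hV₁ hD, ← hU',
      fromCols_mul_conjTranspose_fromCols, add_sub_cancel_left]
  have hB'B : 1 - B' * B = tV₂ * tV₂ᴴ := by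
    rw [hB, hB', mul_mul_conjTranspose_mul_mul_mul_conjTranspose _ _ _ htU₁ hG, ← htV',
      fromCols_mul_conjTranspose_fromCols, add_sub_cancel_left]
  have hX₁ : B' * (U₂ * U₂ᴴ) = tV₁ * (G' * tU₁ᴴ * U₂) * U₂ᴴ := by
    simp only [hB', Matrix.mul_assoc]
  have hX₂ : tV₂ * tV₂ᴴ * A' = tV₂ * (tV₂ᴴ * V₁ * D') * U₁ᴴ := by
    simp only [hA', Matrix.mul_assoc]
  have hX₃ : B' * (B - A) * A' = tV₁ * (G' * tU₁ᴴ * (B - A) * A') := by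
    simp only [hB', Matrix.mul_assoc]
  have hX₃' : B' * (B - A) * A' = B' * (B - A) * V₁ * D' * U₁ᴴ := by
    simp only [hA', Matrix.mul_assoc]
  rw [sub_eq_wedin_decomposition A B, hAA', hB'B, frobSq_sub_sub_of_trace_eq_zero, hX₁, hX₂,
    frobSq_mul_conjTranspose_of_conjTranspose_mul_self hU₂,
    frobSq_mul_conjTranspose_of_conjTranspose_mul_self hU₁,
    frobSq_mul_of_conjTranspose_mul_self htV₁, frobSq_mul_of_conjTranspose_mul_self htV₂]
  · rw [hX₁, hX₂, Matrix.mul_assoc tV₁, Matrix.mul_assoc tV₂]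
    exact trace_conjTranspose_mul_mul_eq_zero_of_left htV₁₂ _ _
  · rw [hX₁, hX₃']
    exact trace_conjTranspose_mul_mul_eq_zero_of_right hU₁₂ _ _
  · rw [hX₂, hX₃, Matrix.mul_assoc tV₂]
    exact trace_conjTranspose_mul_mul_eq_zero_of_left htV₂₁ _ _

theorem stmt15_general {m n r s : ℕ}
    (A B : Matrix (Fin m) (Fin n) ℂ)
    (σ : Fin r → ℝ) (hσpos : ∀ i, 0 < σ i)
    (τ : Fin s → ℝ) (hτpos : ∀ i, 0 < τ i)
    (U₁ : Matrix (Fin m) (Fin r) ℂ) (U₂ : Matrix (Fin m) (Fin (m - r)) ℂ)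
    (V₁ : Matrix (Fin n) (Fin r) ℂ) (V₂ : Matrix (Fin n) (Fin (n - r)) ℂ)
    (tU₁ : Matrix (Fin m) (Fin s) ℂ) (tU₂ : Matrix (Fin m) (Fin (m - s)) ℂ)
    (tV₁ : Matrix (Fin n) (Fin s) ℂ) (tV₂ : Matrix (Fin n) (Fin (n - s)) ℂ)
    (hU : (fromCols U₁ U₂)ᴴ * fromCols U₁ U₂ = 1
        ∧ fromCols U₁ U₂ * (fromCols U₁ U₂)ᴴ = 1)
    (hV : (fromCols V₁ V₂)ᴴ * fromCols V₁ V₂ = 1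
        ∧ fromCols V₁ V₂ * (fromCols V₁ V₂)ᴴ = 1)
    (htU : (fromCols tU₁ tU₂)ᴴ * fromCols tU₁ tU₂ = 1
        ∧ fromCols tU₁ tU₂ * (fromCols tU₁ tU₂)ᴴ = 1)
    (htV : (fromCols tV₁ tV₂)ᴴ * fromCols tV₁ tV₂ = 1
        ∧ fromCols tV₁ tV₂ * (fromCols tV₁ tV₂)ᴴ = 1)
    (hAsvd : A = U₁ * diagonal (fun i => (σ i : ℂ)) * V₁ᴴ)
    (hBsvd : B = tU₁ * diagonal (fun i => (τ i : ℂ)) * tV₁ᴴ)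
    (E : Matrix (Fin m) (Fin n) ℂ) (hE : E = B - A)
    (Adag Bdag : Matrix (Fin n) (Fin m) ℂ)
    (hAdag : Adag = V₁ * diagonal (fun i => ((σ i : ℂ))⁻¹) * U₁ᴴ)
    (hBdag : Bdag = tV₁ * diagonal (fun i => ((τ i : ℂ))⁻¹) * tU₁ᴴ) :
    frobSq (Bdag - Adag)
      = frobSq (diagonal (fun i => ((τ i : ℂ))⁻¹) * tU₁ᴴ * U₂)
        + frobSq (tV₂ᴴ * V₁ * diagonal (fun i => ((σ i : ℂ))⁻¹))
        + frobSq (Bdag * E * Adag) := by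
  have hV₁ := ((conjTranspose_fromCols_mul_fromCols_eq_one_iff V₁ V₂).1 hV.1).1
  have htU₁ := ((conjTranspose_fromCols_mul_fromCols_eq_one_iff tU₁ tU₂).1 htU.1).1
  have hσ : diagonal (fun i => (σ i : ℂ)) * diagonal (fun i => ((σ i : ℂ))⁻¹) = 1 :=
    diagonal_mul_diagonal_inv fun i => Complex.ofReal_ne_zero.2 (hσpos i).ne'
  have hτ : diagonal (fun i => ((τ i : ℂ))⁻¹) * diagonal (fun i => (τ i : ℂ)) = 1 :=
    mul_eq_one_comm.1 (diagonal_mul_diagonal_inv fun i => Complex.ofReal_ne_zero.2 (hτpos i).ne')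
  rw [hE]
  exact frobSq_sub_eq_of_thinSVD hU.1 hU.2 hV₁ htU₁ htV.1 htV.2 hσ hτ hAsvd hBsvd hAdag hBdag

theorem stmt15 {m n r s : ℕ}
    (A B : Matrix (Fin m) (Fin n) ℂ)
    (hrankA : A.rank = r) (hrankB : B.rank = s)
    (σ : Fin r → ℝ) (hσmono : Antitone σ) (hσpos : ∀ i, 0 < σ i)
    (τ : Fin s → ℝ) (hτmono : Antitone τ) (hτpos : ∀ i, 0 < τ i)
    (U₁ : Matrix (Fin m) (Fin r) ℂ) (U₂ : Matrix (Fin m) (Fin (m - r)) ℂ)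
    (V₁ : Matrix (Fin n) (Fin r) ℂ) (V₂ : Matrix (Fin n) (Fin (n - r)) ℂ)
    (tU₁ : Matrix (Fin m) (Fin s) ℂ) (tU₂ : Matrix (Fin m) (Fin (m - s)) ℂ)
    (tV₁ : Matrix (Fin n) (Fin s) ℂ) (tV₂ : Matrix (Fin n) (Fin (n - s)) ℂ)
    (hU : (fromCols U₁ U₂)ᴴ * fromCols U₁ U₂ = 1
        ∧ fromCols U₁ U₂ * (fromCols U₁ U₂)ᴴ = 1)
    (hV : (fromCols V₁ V₂)ᴴ * fromCols V₁ V₂ = 1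
        ∧ fromCols V₁ V₂ * (fromCols V₁ V₂)ᴴ = 1)
    (htU : (fromCols tU₁ tU₂)ᴴ * fromCols tU₁ tU₂ = 1
        ∧ fromCols tU₁ tU₂ * (fromCols tU₁ tU₂)ᴴ = 1)
    (htV : (fromCols tV₁ tV₂)ᴴ * fromCols tV₁ tV₂ = 1
        ∧ fromCols tV₁ tV₂ * (fromCols tV₁ tV₂)ᴴ = 1)
    (hAsvd : A = U₁ * diagonal (fun i => (σ i : ℂ)) * V₁ᴴ)
    (hBsvd : B = tU₁ * diagonal (fun i => (τ i : ℂ)) * tV₁ᴴ)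
    (E : Matrix (Fin m) (Fin n) ℂ) (hE : E = B - A)
    (Adag Bdag : Matrix (Fin n) (Fin m) ℂ)
    (hAdag : Adag = V₁ * diagonal (fun i => ((σ i : ℂ))⁻¹) * U₁ᴴ)
    (hBdag : Bdag = tV₁ * diagonal (fun i => ((τ i : ℂ))⁻¹) * tU₁ᴴ) :
    frobSq (Bdag - Adag)
      = frobSq (diagonal (fun i => ((τ i : ℂ))⁻¹) * tU₁ᴴ * U₂)
        + frobSq (tV₂ᴴ * V₁ * diagonal (fun i => ((σ i : ℂ))⁻¹))
        + frobSq (Bdag * E * Adag) :=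
  stmt15_general A B σ hσpos τ hτpos U₁ U₂ V₁ V₂ tU₁ tU₂ tV₁ tV₂ hU hV htU htV hAsvd hBsvd E hE Adag
    Bdag hAdag hBdag
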